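/- arXiv:2103.05550 — 7 statements merged into one kernel-verified Lean document; each statement's English description precedes it below -/
import Mathlib

section
/- Let V be a finite type, E : V → V → Prop a decidable edge relation, w : V → V → ℤ a weight function, and let N be the sum of |w u v| over all pairs (u,v) with E u v. If l = [v₀, v₁, …, v_m] is a walk whose weight Sum(l) = ∑_{i<m} w v_i v_{i+1} satisfies Sum(l) < −N, then there exist indices i < j ≤ m with v_i = v_j such that the weight of the cyclic segment, ∑_{i ≤ t < j} w v_t v_{t+1}, is strictly negative. -/
open Finset

private lemma walk_sum_ge_of_nonneg_cycles
    {V : Type*} [Fintype V] (E : V → V → Prop) [DecidableRel E]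
    (w : V → V → ℤ) (m : ℕ) :
    ∀ v : ℕ → V,
      (∀ i < m, E (v i) (v (i + 1))) →
      (∀ i j, i < j → j ≤ m → v i = v j →
        0 ≤ ∑ t ∈ Finset.Ico i j, w (v t) (v (t + 1))) →
      -(∑ p : V × V, if E p.1 p.2 then |w p.1 p.2| else 0) ≤
        ∑ i ∈ Finset.range m, w (v i) (v (i + 1)) := by
  induction m using Nat.strong_induction_on with
  | _ m ih =>
  intro v hwalk hcyc
  classical
  by_cases hinj : ∀ a ≤ m, ∀ b ≤ m, v a = v b → a = b
  · -- all vertices distinct: edges are distinct, bound by N directly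
    have hA : ∑ i ∈ Finset.range m, (if E (v i) (v (i+1)) then |w (v i) (v (i+1))| else 0)
        ≤ ∑ p : V × V, if E p.1 p.2 then |w p.1 p.2| else 0 := by
      have hinjOn : ∀ x ∈ Finset.range m, ∀ y ∈ Finset.range m,
          (fun t => (v t, v (t+1))) x = (fun t => (v t, v (t+1))) y → x = y := by
        intro x hx y hy hxy
        simp only [Prod.mk.injEq] at hxy
        exact hinj x (le_of_lt (mem_range.mp hx)) y (le_of_lt (mem_range.mp hy)) hxy.1
      have himg := Finset.sum_image
        (g := fun t => (v t, v (t+1)))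
        (f := fun p : V × V => if E p.1 p.2 then |w p.1 p.2| else 0) hinjOn
      simp only at himg
      rw [← himg]
      apply Finset.sum_le_sum_of_subset_of_nonneg (Finset.subset_univ _)
      intro p _ _
      split <;> positivity
    have hB : ∀ i ∈ Finset.range m,
        -(if E (v i) (v (i+1)) then |w (v i) (v (i+1))| else 0) ≤ w (v i) (v (i+1)) := by
      intro i hi
      rw [if_pos (hwalk i (mem_range.mp hi))]
      exact neg_abs_le _
    have hC := Finset.sum_le_sum hB
    rw [Finset.sum_neg_distrib] at hC
    linarith
  · push_neg at hinj
    obtain ⟨a, ha, b, hb, hvab, hab⟩ := hinj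
    -- the set of cycles is nonempty; pick one of minimum weight
    set S : Finset (ℕ × ℕ) :=
      (Finset.range (m+1) ×ˢ Finset.range (m+1)).filter
        (fun p => p.1 < p.2 ∧ v p.1 = v p.2) with hS
    have hne : S.Nonempty := by
      rcases Nat.lt_or_ge a b with h | h
      · exact ⟨(a, b), by simp [hS, Finset.mem_filter, Nat.lt_succ_iff, ha, hb, h, hvab]⟩
      · have : b < a := by omega
        exact ⟨(b, a), by simp [hS, Finset.mem_filter, Nat.lt_succ_iff, ha, hb, this, hvab.symm]⟩
    obtain ⟨⟨i, j⟩, hmem, hmin⟩ :=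
      Finset.exists_min_image S (fun p => ∑ t ∈ Finset.Ico p.1 p.2, w (v t) (v (t+1))) hne
    simp only [hS, Finset.mem_filter, Finset.mem_product, Finset.mem_range,
      Nat.lt_succ_iff] at hmem
    obtain ⟨⟨him, hjm⟩, hij, hvij⟩ := hmem
    set δ := j - i with hδdef
    have hδ1 : 1 ≤ δ := by omega
    have hiδ : i + δ = j := by omega
    set m' := m - δ with hm'def
    have hm'δ : m' + δ = m := by omega
    have him' : i ≤ m' := by omega
    have hm'lt : m' < m := by omega
    set v' : ℕ → V := fun t => if t < i then v t else v (t + δ) with hv'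
    -- edge weights of the spliced walk
    have hW : ∀ t, w (v' t) (v' (t+1)) =
        if t < i then w (v t) (v (t+1)) else w (v (t+δ)) (v (t+δ+1)) := by
      intro t
      by_cases ht : t < i
      · rw [if_pos ht]
        show w (if t < i then v t else _) (if t + 1 < i then v (t+1) else v (t+1+δ)) = _
        rw [if_pos ht]
        by_cases ht1 : t + 1 < i
        · rw [if_pos ht1]
        · have h1 : t + 1 = i := by omega
          rw [if_neg ht1]
          have : v (t + 1 + δ) = v (t + 1) := by rw [h1, hiδ, ← hvij]
          rw [this]
      · rw [if_neg ht]
        show w (if t < i then _ else v (t + δ)) (if t + 1 < i then _ else v (t+1+δ)) = _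
        rw [if_neg ht, if_neg (by omega : ¬ t + 1 < i)]
        congr 2
        omega
    -- spliced walk is a walk
    have hwalk' : ∀ t < m', E (v' t) (v' (t+1)) := by
      intro t htm'
      by_cases ht : t < i
      · show E (if t < i then v t else _) (if t + 1 < i then v (t+1) else v (t+1+δ))
        rw [if_pos ht]
        by_cases ht1 : t + 1 < i
        · rw [if_pos ht1]; exact hwalk t (by omega)
        · have h1 : t + 1 = i := by omega
          rw [if_neg ht1]
          have : v (t + 1 + δ) = v (t + 1) := by rw [h1, hiδ, ← hvij]
          rw [this]; exact hwalk t (by omega)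
      · show E (if t < i then _ else v (t + δ)) (if t + 1 < i then _ else v (t+1+δ))
        rw [if_neg ht, if_neg (by omega : ¬ t + 1 < i)]
        have : t + 1 + δ = t + δ + 1 := by omega
        rw [this]
        exact hwalk (t + δ) (by omega)
    -- sum identities
    have hshift : ∀ a b : ℕ, i ≤ a →
        ∑ t ∈ Finset.Ico a b, w (v' t) (v' (t+1)) =
          ∑ t ∈ Finset.Ico (a+δ) (b+δ), w (v t) (v (t+1)) := by
      intro a b hia
      rw [← Finset.sum_Ico_add (fun t => w (v t) (v (t+1))) a b δ]
      apply Finset.sum_congr rfl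
      intro t htmem
      rw [hW t, if_neg (by simp [Finset.mem_Ico] at htmem; omega), Nat.add_comm δ t]
    have hlow : ∀ a b : ℕ, b ≤ i →
        ∑ t ∈ Finset.Ico a b, w (v' t) (v' (t+1)) =
          ∑ t ∈ Finset.Ico a b, w (v t) (v (t+1)) := by
      intro a b hbi
      apply Finset.sum_congr rfl
      intro t htmem
      rw [hW t, if_pos (by simp [Finset.mem_Ico] at htmem; omega)]
    have hCineq : 0 ≤ ∑ t ∈ Finset.Ico i j, w (v t) (v (t+1)) := hcyc i j hij hjm hvij
    have hsum' : ∑ t ∈ Finset.range m', w (v' t) (v' (t+1)) =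
        (∑ t ∈ Finset.range m, w (v t) (v (t+1)))
          - ∑ t ∈ Finset.Ico i j, w (v t) (v (t+1)) := by
      have e1 : ∑ t ∈ Finset.range m', w (v' t) (v' (t+1)) =
          ∑ t ∈ Finset.Ico 0 i, w (v' t) (v' (t+1)) +
          ∑ t ∈ Finset.Ico i m', w (v' t) (v' (t+1)) := by
        rw [Finset.sum_Ico_consecutive _ (Nat.zero_le i) him', ← Finset.range_eq_Ico]
      have e2 : ∑ t ∈ Finset.range m, w (v t) (v (t+1)) =
          ∑ t ∈ Finset.Ico 0 i, w (v t) (v (t+1)) +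
          ∑ t ∈ Finset.Ico i j, w (v t) (v (t+1)) +
          ∑ t ∈ Finset.Ico j m, w (v t) (v (t+1)) := by
        rw [Finset.range_eq_Ico,
          ← Finset.sum_Ico_consecutive _ (Nat.zero_le i) (by omega : i ≤ m),
          ← Finset.sum_Ico_consecutive _ (by omega : i ≤ j) (by omega : j ≤ m)]
        ring
      rw [e1, e2, hlow 0 i le_rfl, hshift i m' le_rfl, hiδ, hm'δ]
      ring
    -- cycles of the spliced walk are nonnegative
    have hcyc' : ∀ i' j', i' < j' → j' ≤ m' → v' i' = v' j' →
        0 ≤ ∑ t ∈ Finset.Ico i' j', w (v' t) (v' (t+1)) := by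
      intro i' j' hij' hj'm' hv'eq
      by_cases hc1 : j' ≤ i
      · rw [hlow i' j' hc1]
        have h1 : v' i' = v i' := if_pos (by omega)
        have h2 : v' j' = v j' := by
          by_cases h : j' < i
          · exact if_pos h
          · have hj'i : j' = i := by omega
            show (if j' < i then v j' else v (j' + δ)) = v j'
            rw [if_neg h, hj'i, hiδ, ← hvij]
        exact hcyc i' j' hij' (by omega) (h1 ▸ h2 ▸ hv'eq)
      · by_cases hc2 : i ≤ i'
        · rw [hshift i' j' hc2]
          have h1 : v' i' = v (i' + δ) := if_neg (by omega)
          have h2 : v' j' = v (j' + δ) := if_neg (by omega)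
          exact hcyc (i'+δ) (j'+δ) (by omega) (by omega) (h1 ▸ h2 ▸ hv'eq)
        · -- straddling: i' < i < j'
          have hi'i : i' < i := by omega
          have hij' : i < j' := by omega
          have hsplit : ∑ t ∈ Finset.Ico i' j', w (v' t) (v' (t+1)) =
              ∑ t ∈ Finset.Ico i' i, w (v t) (v (t+1)) +
              ∑ t ∈ Finset.Ico j (j'+δ), w (v t) (v (t+1)) := by
            rw [← Finset.sum_Ico_consecutive _ (by omega : i' ≤ i) (by omega : i ≤ j'),
              hlow i' i le_rfl, hshift i j' le_rfl, hiδ]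
          have h1 : v' i' = v i' := if_pos hi'i
          have h2 : v' j' = v (j' + δ) := if_neg (by omega)
          have hbig : v i' = v (j' + δ) := h1 ▸ h2 ▸ hv'eq
          have hbigmem : (i', j'+δ) ∈ S := by
            simp [hS, Finset.mem_filter, Finset.mem_product, Nat.lt_succ_iff]
            exact ⟨⟨by omega, by omega⟩, by omega, hbig⟩
          have hminle := hmin (i', j'+δ) hbigmem
          have htot : ∑ t ∈ Finset.Ico i' (j'+δ), w (v t) (v (t+1)) =
              ∑ t ∈ Finset.Ico i' i, w (v t) (v (t+1)) +
              ∑ t ∈ Finset.Ico i j, w (v t) (v (t+1)) +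
              ∑ t ∈ Finset.Ico j (j'+δ), w (v t) (v (t+1)) := by
            rw [← Finset.sum_Ico_consecutive _ (by omega : i' ≤ i) (by omega : i ≤ j'+δ),
              ← Finset.sum_Ico_consecutive _ (by omega : i ≤ j) (by omega : j ≤ j'+δ)]
            ring
          simp only at hminle
          rw [hsplit]
          linarith [hminle, htot]
    have hIH := ih m' hm'lt v' hwalk' hcyc'
    linarith [hsum', hCineq, hIH]

/-- A walk in a finite edge-weighted directed graph whose total weight drops
below `-N` (where `N` is the sum of absolute values of all edge weights)
must contain a strictly negative cycle. -/
theorem negative_sum_walk_has_negative_cycle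
    {V : Type*} [Fintype V] (E : V → V → Prop) [DecidableRel E]
    (w : V → V → ℤ) (N : ℤ)
    (hN : N = ∑ p : V × V, if E p.1 p.2 then |w p.1 p.2| else 0)
    (m : ℕ) (v : ℕ → V)
    (hwalk : ∀ i < m, E (v i) (v (i + 1)))
    (hsum : (∑ i ∈ Finset.range m, w (v i) (v (i + 1))) < -N) :
    ∃ i j, i < j ∧ j ≤ m ∧ v i = v j ∧
      (∑ t ∈ Finset.Ico i j, w (v t) (v (t + 1))) < 0 := by
  by_contra h
  push_neg at h
  have h' : ∀ i j, i < j → j ≤ m → v i = v j →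
      0 ≤ ∑ t ∈ Finset.Ico i j, w (v t) (v (t + 1)) := by
    intro i j hij hjm hv
    exact h i j hij hjm hv
  have := walk_sum_ge_of_nonneg_cycles E w m v hwalk h'
  rw [hN] at hsum
  linarith
end

section
/- Let V be a finite type, E : V → V → Prop a decidable edge relation, and w : V → V → ℤ a weight function. For every walk l = [v₀, v₁, …, v_m] there exist a walk l' with the same first vertex v₀ and the same last vertex v_m whose vertices are pairwise distinct, and a finite list of closed walks c₁, …, c_r (walks of length at least one edge whose first and last vertices coincide, and all of whose vertices occur in l), such that Sum(l) = Sum(l') + ∑_{i=1}^{r} Sum(c_i). -/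
private theorem walk_decomposition_aux
    {V : Type*} (E : V → V → Prop) (w : V → V → ℤ) :
    ∀ m : ℕ, ∀ v : ℕ → V, (∀ i < m, E (v i) (v (i + 1))) →
    ∃ (m' : ℕ) (v' : ℕ → V) (r : ℕ) (len : ℕ → ℕ) (c : ℕ → ℕ → V),
      (∀ i < m', E (v' i) (v' (i + 1))) ∧
      v' 0 = v 0 ∧ v' m' = v m ∧
      (∀ i ≤ m', ∀ j ≤ m', v' i = v' j → i = j) ∧
      (∀ i < r, 1 ≤ len i) ∧
      (∀ i < r, ∀ t < len i, E (c i t) (c i (t + 1))) ∧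
      (∀ i < r, c i 0 = c i (len i)) ∧
      (∀ i < r, ∀ t ≤ len i, ∃ s ≤ m, c i t = v s) ∧
      (∑ i ∈ Finset.range m, w (v i) (v (i + 1))) =
        (∑ i ∈ Finset.range m', w (v' i) (v' (i + 1))) +
          ∑ i ∈ Finset.range r,
            ∑ t ∈ Finset.range (len i), w (c i t) (c i (t + 1)) := by
  intro m
  induction m using Nat.strong_induction_on with
  | _ m ih =>
  intro v hwalk
  by_cases hsimple : ∀ i ≤ m, ∀ j ≤ m, v i = v j → i = j
  · exact ⟨m, v, 0, fun _ => 1, fun _ _ => v 0, hwalk, rfl, rfl, hsimple,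
      by omega, by omega, by omega, by omega, by simp⟩
  · push_neg at hsimple
    obtain ⟨a, ha, b, hb, hab, hne⟩ := hsimple
    -- get i < j ≤ m with v i = v j
    obtain ⟨i, j, hij, hjm, heq⟩ : ∃ i j : ℕ, i < j ∧ j ≤ m ∧ v i = v j := by
      rcases hne.lt_or_gt with h | h
      · exact ⟨a, b, h, hb, hab⟩
      · exact ⟨b, a, h, ha, hab.symm⟩
    set d := j - i with hd
    have hd1 : 1 ≤ d := by omega
    have hidj : i + d = j := by omega
    set v₂ : ℕ → V := fun k => if k ≤ i then v k else v (k + d) with hv₂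
    have hm2 : m - d < m := by omega
    have hwalk₂ : ∀ k < m - d, E (v₂ k) (v₂ (k + 1)) := by
      intro k hk
      by_cases h1 : k + 1 ≤ i
      · simp only [hv₂, if_pos (by omega : k ≤ i), if_pos h1]
        exact hwalk k (by omega)
      · by_cases h2 : k ≤ i
        · have hki : k = i := by omega
          simp only [hv₂, if_pos h2, if_neg h1]
          rw [hki, heq]
          have : i + 1 + d = j + 1 := by omega
          rw [this]
          exact hwalk j (by omega)
        · simp only [hv₂, if_neg h2, if_neg h1]
          have : k + 1 + d = k + d + 1 := by omega
          rw [this]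
          exact hwalk (k + d) (by omega)
    obtain ⟨m', v', r, len, c, H1, H2, H3, H4, H5, H6, H7, H8, H9⟩ :=
      ih (m - d) hm2 v₂ hwalk₂
    refine ⟨m', v', r + 1,
      fun k => if k < r then len k else d,
      fun k => if k < r then c k else fun t => v (i + t),
      H1, ?_, ?_, H4, ?_, ?_, ?_, ?_, ?_⟩
    · rw [H2]; simp [hv₂]
    · rw [H3]
      by_cases h : m - d ≤ i
      · have h1 : j = m := by omega
        have h2 : m - d = i := by omega
        simp [hv₂, h2, heq, h1]
      · simp only [hv₂, if_neg h]
        congr 1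
        omega
    · intro k hk
      by_cases h : k < r
      · simpa [h] using H5 k h
      · simp only [if_neg h]; exact hd1
    · intro k hk t ht
      by_cases h : k < r
      · simp only [if_pos h] at ht ⊢
        exact H6 k h t ht
      · simp only [if_neg h] at ht ⊢
        exact hwalk (i + t) (by omega)
    · intro k hk
      by_cases h : k < r
      · simpa [h] using H7 k h
      · simp only [if_neg h]
        rw [Nat.add_zero, heq]
        congr 1
        omega
    · intro k hk t ht
      by_cases h : k < r
      · simp only [if_pos h] at ht ⊢
        obtain ⟨s, hs, hcs⟩ := H8 k h t ht
        by_cases hsi : s ≤ i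
        · exact ⟨s, by omega, by simpa [hv₂, hsi] using hcs⟩
        · exact ⟨s + d, by omega, by simpa [hv₂, hsi] using hcs⟩
      · simp only [if_neg h] at ht ⊢
        exact ⟨i + t, by omega, rfl⟩
    · -- sum identity
      have key : ∑ k ∈ Finset.range m, w (v k) (v (k + 1)) =
          (∑ k ∈ Finset.range (m - d), w (v₂ k) (v₂ (k + 1))) +
            ∑ t ∈ Finset.range d, w (v (i + t)) (v (i + t + 1)) := by
        have e1 : ∑ k ∈ Finset.range m, w (v k) (v (k + 1)) =
            (∑ k ∈ Finset.range i, w (v k) (v (k + 1)))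
            + (∑ k ∈ Finset.Ico i j, w (v k) (v (k + 1)))
            + ∑ k ∈ Finset.Ico j m, w (v k) (v (k + 1)) := by
          rw [Finset.range_eq_Ico,
            ← Finset.sum_Ico_consecutive _ (Nat.zero_le j) hjm,
            ← Finset.sum_Ico_consecutive _ (Nat.zero_le i) hij.le,
            ← Finset.range_eq_Ico]
        have e2 : ∑ t ∈ Finset.range d, w (v (i + t)) (v (i + t + 1)) =
            ∑ k ∈ Finset.Ico i j, w (v k) (v (k + 1)) := by
          rw [Finset.sum_Ico_eq_sum_range]
        have e3 : ∑ k ∈ Finset.range (m - d), w (v₂ k) (v₂ (k + 1)) =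
            (∑ k ∈ Finset.range i, w (v k) (v (k + 1)))
            + ∑ k ∈ Finset.Ico j m, w (v k) (v (k + 1)) := by
          have m2i : i ≤ m - d := by omega
          rw [Finset.range_eq_Ico,
            ← Finset.sum_Ico_consecutive _ (Nat.zero_le i) m2i,
            ← Finset.range_eq_Ico]
          congr 1
          · refine Finset.sum_congr rfl ?_
            intro k hk
            rw [Finset.mem_range] at hk
            simp only [hv₂, if_pos (by omega : k ≤ i), if_pos (by omega : k + 1 ≤ i)]
          · rw [Finset.sum_Ico_eq_sum_range, Finset.sum_Ico_eq_sum_range]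
            have hmd : m - d - i = m - j := by omega
            rw [hmd]
            refine Finset.sum_congr rfl ?_
            intro t ht
            rw [Finset.mem_range] at ht
            by_cases ht0 : t = 0
            · subst ht0
              simp only [hv₂, Nat.add_zero, if_pos le_rfl,
                if_neg (by omega : ¬ i + 1 ≤ i), heq]
              congr 2
              omega
            · simp only [hv₂, if_neg (by omega : ¬ i + t ≤ i),
                if_neg (by omega : ¬ i + t + 1 ≤ i)]
              congr 2 <;> omega
        rw [e1, e2, e3]; ring
      rw [key, H9, Finset.sum_range_succ]
      beta_reduce
      have hlast : (if r < r then len r else d) = d := by simp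
      have hlastc : (if r < r then c r else fun t => v (i + t)) = fun t => v (i + t) := by simp
      simp only [hlast, hlastc]
      have hrest : ∑ k ∈ Finset.range r,
          ∑ t ∈ Finset.range (if k < r then len k else d),
            w ((if k < r then c k else fun t => v (i + t)) t)
              ((if k < r then c k else fun t => v (i + t)) (t + 1)) =
          ∑ k ∈ Finset.range r,
            ∑ t ∈ Finset.range (len k), w (c k t) (c k (t + 1)) := by
        refine Finset.sum_congr rfl ?_
        intro k hk
        rw [Finset.mem_range] at hk
        simp [hk]
      simp only [hrest, ← add_assoc]

/-- Cycle decomposition of walks: every walk decomposes into a simple walk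
with the same endpoints together with finitely many closed walks (on vertices
occurring in the original walk), with matching total weight. -/
theorem walk_decomposition
    {V : Type*} [Fintype V] (E : V → V → Prop) [DecidableRel E]
    (w : V → V → ℤ)
    (m : ℕ) (v : ℕ → V)
    (hwalk : ∀ i < m, E (v i) (v (i + 1))) :
    ∃ (m' : ℕ) (v' : ℕ → V) (r : ℕ) (len : ℕ → ℕ) (c : ℕ → ℕ → V),
      (∀ i < m', E (v' i) (v' (i + 1))) ∧
      v' 0 = v 0 ∧ v' m' = v m ∧
      (∀ i ≤ m', ∀ j ≤ m', v' i = v' j → i = j) ∧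
      (∀ i < r, 1 ≤ len i) ∧
      (∀ i < r, ∀ t < len i, E (c i t) (c i (t + 1))) ∧
      (∀ i < r, c i 0 = c i (len i)) ∧
      (∀ i < r, ∀ t ≤ len i, ∃ s ≤ m, c i t = v s) ∧
      (∑ i ∈ Finset.range m, w (v i) (v (i + 1))) =
        (∑ i ∈ Finset.range m', w (v' i) (v' (i + 1))) +
          ∑ i ∈ Finset.range r,
            ∑ t ∈ Finset.range (len i), w (c i t) (c i (t + 1)) := by
  exact walk_decomposition_aux E w m v hwalk
end

section
/- Let V be a finite type, σ : V → V a successor function, and w : V → ℤ a weight function. Suppose every cycle of σ has nonnegative weight, i.e., for all v ∈ V and all k ≥ 1 with σ^[k] v = v one has ∑_{i<k} w (σ^[i] v) ≥ 0. Then for every v ∈ V and every n ∈ ℕ, the partial sum Sₙ(v) = ∑_{i<n} w (σ^[i] v) satisfies Sₙ(v) ≥ −∑_{u∈V} |w u|. -/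
/-- If every cycle of a successor function on a finite weighted arena has
nonnegative weight, then every partial sum along an orbit is bounded below
by minus the sum of the absolute values of all weights. -/
theorem partial_sums_bounded_below_of_nonneg_cycles
    {V : Type*} [Fintype V] (σ : V → V) (w : V → ℤ)
    (hcyc : ∀ v : V, ∀ k : ℕ, 1 ≤ k → σ^[k] v = v →
      0 ≤ ∑ i ∈ Finset.range k, w (σ^[i] v))
    (v : V) (n : ℕ) :
    -(∑ u : V, |w u|) ≤ ∑ i ∈ Finset.range n, w (σ^[i] v) := by
  induction n using Nat.strong_induction_on with
  | _ n ih =>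
  classical
  by_cases hinj : Set.InjOn (fun i => σ^[i] v) (Finset.range n)
  · have h1 : ∑ i ∈ Finset.range n, |w (σ^[i] v)| ≤ ∑ u : V, |w u| := by
      have himg : ∑ u ∈ (Finset.range n).image (fun i => σ^[i] v), |w u|
          = ∑ i ∈ Finset.range n, |w (σ^[i] v)| :=
        Finset.sum_image
          (fun a ha b hb hab => hinj (Finset.mem_coe.mpr ha) (Finset.mem_coe.mpr hb) hab)
      rw [← himg]
      exact Finset.sum_le_sum_of_subset_of_nonneg (Finset.subset_univ _)
        (fun _ _ _ => abs_nonneg _)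
    have h2 : -(∑ i ∈ Finset.range n, |w (σ^[i] v)|) ≤ ∑ i ∈ Finset.range n, w (σ^[i] v) := by
      rw [← Finset.sum_neg_distrib]
      exact Finset.sum_le_sum fun i _ => neg_abs_le _
    linarith
  · rw [Set.InjOn] at hinj
    push_neg at hinj
    obtain ⟨i, hi, j, hj, heq, hne⟩ := hinj
    simp only [Finset.coe_range, Set.mem_Iio] at hi hj
    wlog hij : i < j generalizing i j
    · exact this j i heq.symm (Ne.symm hne) hj hi (by omega)
    have hcyc' : 0 ≤ ∑ t ∈ Finset.range (j - i), w (σ^[t] (σ^[i] v)) := by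
      apply hcyc _ _ (by omega)
      rw [← Function.iterate_add_apply, show j - i + i = j from by omega]
      exact heq.symm
    have hiter : ∀ t : ℕ, σ^[j + t] v = σ^[i + t] v := by
      intro t
      rw [add_comm j t, add_comm i t, Function.iterate_add_apply,
        Function.iterate_add_apply, heq]
    have key : ∑ t ∈ Finset.range (i + (n - j)), w (σ^[t] v)
        ≤ ∑ t ∈ Finset.range n, w (σ^[t] v) := by
      have hn : n = j + (n - j) := by omega
      have hjsplit : j = i + (j - i) := by omega
      calc ∑ t ∈ Finset.range (i + (n - j)), w (σ^[t] v)
          = (∑ t ∈ Finset.range i, w (σ^[t] v))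
            + ∑ t ∈ Finset.range (n - j), w (σ^[i + t] v) := Finset.sum_range_add _ _ _
        _ ≤ ((∑ t ∈ Finset.range i, w (σ^[t] v))
            + ∑ t ∈ Finset.range (j - i), w (σ^[i + t] v))
            + ∑ t ∈ Finset.range (n - j), w (σ^[j + t] v) := by
            have : ∀ t : ℕ, σ^[i + t] v = σ^[t] (σ^[i] v) := by
              intro t; rw [add_comm, Function.iterate_add_apply]
            simp only [this, hiter]
            linarith
        _ = (∑ t ∈ Finset.range j, w (σ^[t] v))
            + ∑ t ∈ Finset.range (n - j), w (σ^[j + t] v) := by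
            have hs := Finset.sum_range_add (fun t => w (σ^[t] v)) i (j - i)
            rw [show i + (j - i) = j from by omega] at hs
            rw [hs]
        _ = ∑ t ∈ Finset.range n, w (σ^[t] v) := by
            have hs := Finset.sum_range_add (fun t => w (σ^[t] v)) j (n - j)
            rw [show j + (n - j) = n from by omega] at hs
            rw [hs]
    exact le_trans (ih _ (by omega)) key
end

section
/- Let V be a finite type, σ : V → V a successor function, and w : V → ℤ a weight function. Suppose every cycle of σ has nonnegative weight, i.e., for all v ∈ V and all k ≥ 1 with σ^[k] v = v one has ∑_{i<k} w (σ^[i] v) ≥ 0. Then for every v ∈ V, the limit inferior as n → ∞ of the running averages (Sₙ(v) : ℝ)/n is at least 0, where Sₙ(v) = ∑_{i<n} w (σ^[i] v). -/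
open Filter

private lemma Ssplit {V : Type*} (σ : V → V) (w : V → ℤ) (u : V) (a b : ℕ) :
    ∑ i ∈ Finset.range (a + b), w (σ^[i] u)
      = (∑ i ∈ Finset.range a, w (σ^[i] u))
        + ∑ i ∈ Finset.range b, w (σ^[i] (σ^[a] u)) := by
  rw [Finset.sum_range_add]
  congr 1
  refine Finset.sum_congr rfl fun i _ => ?_
  rw [← Function.iterate_add_apply, Nat.add_comm]

/-- If every cycle of a successor function on a finite weighted arena has
nonnegative weight, then the limit inferior of the running averages along
any orbit is at least `0`. -/
theorem liminf_avg_nonneg_of_nonneg_cycles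
    {V : Type*} [Fintype V] (σ : V → V) (w : V → ℤ)
    (hcyc : ∀ v : V, ∀ k : ℕ, 1 ≤ k → σ^[k] v = v →
      0 ≤ ∑ i ∈ Finset.range k, w (σ^[i] v))
    (v : V) :
    0 ≤ Filter.liminf
      (fun n : ℕ => ((∑ i ∈ Finset.range n, w (σ^[i] v) : ℤ) : ℝ) / n)
      Filter.atTop := by
  classical
  set M : ℤ := ∑ u : V, |w u| with hM
  have hMnonneg : 0 ≤ M := Finset.sum_nonneg fun u _ => abs_nonneg _
  have hwM : ∀ u : V, -M ≤ w u := by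
    intro u
    have h1 : |w u| ≤ M :=
      Finset.single_le_sum (f := fun u => |w u|) (fun u _ => abs_nonneg _)
        (Finset.mem_univ u)
    linarith [neg_abs_le (w u)]
  set C : ℤ := (Fintype.card V : ℤ) * M with hCdef
  have hC : 0 ≤ C := mul_nonneg (by positivity) hMnonneg
  have key : ∀ n : ℕ, ∀ u : V, -C ≤ ∑ i ∈ Finset.range n, w (σ^[i] u) := by
    intro n
    induction n using Nat.strong_induction_on with
    | _ n IH =>
      intro u
      by_cases hn : n ≤ Fintype.card V
      · have h1 : (-(n : ℤ)) * M ≤ ∑ i ∈ Finset.range n, w (σ^[i] u) := by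
          calc (-(n : ℤ)) * M = ∑ _i ∈ Finset.range n, (-M) := by
                simp [Finset.sum_const, mul_comm]
            _ ≤ _ := Finset.sum_le_sum fun i _ => hwM _
        have h2 : (n : ℤ) ≤ Fintype.card V := by exact_mod_cast hn
        nlinarith
      · push_neg at hn
        obtain ⟨a, b, hab, heq⟩ :=
          Fintype.exists_ne_map_eq_of_card_lt
            (fun i : Fin (Fintype.card V + 1) => σ^[(i : ℕ)] u) (by simp)
        wlog hlt : (a : ℕ) < (b : ℕ) generalizing a b
        · exact this b a hab.symm heq.symm
            (lt_of_le_of_ne (not_lt.mp hlt) (fun h => hab (Fin.ext h.symm)))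
        set i := (a : ℕ)
        set j := (b : ℕ)
        have hj : j ≤ Fintype.card V := Nat.lt_succ_iff.mp b.isLt
        set k := j - i with hk
        have hk1 : 1 ≤ k := Nat.le_sub_of_add_le (by omega)
        have hjik : j = i + k := by omega
        set r := n - j with hr
        have hn' : n = i + (k + r) := by omega
        have hcycpt : σ^[k] (σ^[i] u) = σ^[i] u := by
          rw [← Function.iterate_add_apply, Nat.add_comm, ← hjik]
          exact heq.symm
        have hcw : 0 ≤ ∑ t ∈ Finset.range k, w (σ^[t] (σ^[i] u)) :=
          hcyc (σ^[i] u) k hk1 hcycpt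
        have e1 : ∑ t ∈ Finset.range n, w (σ^[t] u)
            = (∑ t ∈ Finset.range i, w (σ^[t] u))
              + ((∑ t ∈ Finset.range k, w (σ^[t] (σ^[i] u)))
                + ∑ t ∈ Finset.range r, w (σ^[t] (σ^[i] u))) := by
          rw [hn', Ssplit, Ssplit]
          rw [← Function.iterate_add_apply, Nat.add_comm k i, ← hjik, ← heq]
        have e2 : ∑ t ∈ Finset.range (n - k), w (σ^[t] u)
            = (∑ t ∈ Finset.range i, w (σ^[t] u))
              + ∑ t ∈ Finset.range r, w (σ^[t] (σ^[i] u)) := by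
          have : n - k = i + r := by omega
          rw [this, Ssplit]
        have hIH : -C ≤ ∑ t ∈ Finset.range (n - k), w (σ^[t] u) :=
          IH (n - k) (by omega) u
        rw [e2] at hIH
        rw [e1]
        linarith
  -- now the analytic part
  set S : ℕ → ℤ := fun n => ∑ i ∈ Finset.range n, w (σ^[i] v) with hS
  have hSb : ∀ n : ℕ, (-(C : ℝ)) / n ≤ (S n : ℝ) / n := by
    intro n
    rcases Nat.eq_zero_or_pos n with h0 | hpos
    · simp [h0]
    · have hn : (0 : ℝ) < n := by exact_mod_cast hpos
      rw [div_le_div_iff_of_pos_right hn]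
      exact_mod_cast key n v
  have h1 : Tendsto (fun n : ℕ => (-(C : ℝ)) / n) atTop (nhds 0) :=
    tendsto_const_div_atTop_nhds_zero_nat _
  have h2 : Filter.liminf (fun n : ℕ => (-(C : ℝ)) / n) atTop = 0 :=
    h1.liminf_eq
  rw [← h2]
  refine Filter.liminf_le_liminf (Filter.Eventually.of_forall hSb) ?_ ?_
  · exact h1.isBoundedUnder_ge
  · have hub : ∀ n : ℕ, (S n : ℝ) / n ≤ (M : ℝ) := by
      intro n
      rcases Nat.eq_zero_or_pos n with h0 | hpos
      · simp [h0]; exact_mod_cast hMnonneg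
      · have hn : (0 : ℝ) < n := by exact_mod_cast hpos
        rw [div_le_iff₀ hn]
        have hS' : S n ≤ n * M := by
          calc S n ≤ ∑ _i ∈ Finset.range n, M :=
                Finset.sum_le_sum fun t _ => by
                  have := Finset.single_le_sum (f := fun u => |w u|)
                    (fun u _ => abs_nonneg _) (Finset.mem_univ (σ^[t] v))
                  linarith [le_abs_self (w (σ^[t] v))]
            _ = n * M := by simp [mul_comm]
        calc (S n : ℝ) ≤ (n : ℝ) * M := by exact_mod_cast hS'
          _ = (M : ℝ) * n := by ring
    exact IsBoundedUnder.isCoboundedUnder_ge (Filter.isBoundedUnder_of ⟨(M : ℝ), hub⟩)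
end

section
/- Let V be a finite type, σ : V → V a successor function, and w : V → ℤ a weight function. Suppose every cycle of σ has strictly negative weight, i.e., for all v ∈ V and all k ≥ 1 with σ^[k] v = v one has ∑_{i<k} w (σ^[i] v) < 0. Then for every v ∈ V, the partial sums Sₙ(v) = ∑_{i<n} w (σ^[i] v) tend to −∞ as n → ∞ (the sequence n ↦ Sₙ(v) tends to atBot). -/
open Filter Finset

/-- If every cycle of a successor function on a finite weighted arena has
strictly negative weight, then the partial sums along any orbit tend to
`-∞`. -/
theorem partial_sums_tendsto_atBot_of_neg_cycles
    {V : Type*} [Fintype V] (σ : V → V) (w : V → ℤ)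
    (hcyc : ∀ v : V, ∀ k : ℕ, 1 ≤ k → σ^[k] v = v →
      (∑ i ∈ Finset.range k, w (σ^[i] v)) < 0)
    (v : V) :
    Filter.Tendsto (fun n : ℕ => ∑ i ∈ Finset.range n, w (σ^[i] v))
      Filter.atTop Filter.atBot := by
  -- pigeonhole: the orbit repeats
  obtain ⟨a, b, hab, heq⟩ := Finite.exists_ne_map_eq_of_infinite (fun n : ℕ => σ^[n] v)
  wlog hlt : a < b generalizing a b
  · exact this b a hab.symm heq.symm (by omega)
  set p := b - a with hp
  have hp1 : 1 ≤ p := by omega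
  set u := σ^[a] v with hu
  have hper : σ^[p] u = u := by
    rw [hu, ← Function.iterate_add_apply]
    have h1 : p + a = b := by omega
    rw [h1, ← heq]
  set c := ∑ i ∈ range p, w (σ^[i] u) with hc
  have hcneg : c < 0 := hcyc u p hp1 hper
  have hcle : c ≤ -1 := by omega
  -- sum splitting
  have hsplit : ∀ (x : V) (s t : ℕ),
      ∑ i ∈ range (s + t), w (σ^[i] x)
      = (∑ i ∈ range s, w (σ^[i] x)) + ∑ i ∈ range t, w (σ^[i] (σ^[s] x)) := by
    intro x s t
    rw [Finset.sum_range_add]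
    congr 1
    refine Finset.sum_congr rfl fun i _ => ?_
    rw [← Function.iterate_add_apply, Nat.add_comm]
  -- multiples of the period
  have hperq : ∀ q : ℕ, σ^[q * p] u = u := by
    intro q
    rw [mul_comm, Function.iterate_mul]
    exact Function.iterate_fixed hper q
  have hmul : ∀ q : ℕ, ∑ i ∈ range (q * p), w (σ^[i] u) = q * c := by
    intro q
    induction q with
    | zero => simp
    | succ q ih =>
      have h1 : (q + 1) * p = p + q * p := by ring
      rw [h1, hsplit u p (q * p), hper, ih]
      push_cast; ring
  set M := ∑ i ∈ range p, |w (σ^[i] u)| with hM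
  have hMle : ∀ r : ℕ, r ≤ p → ∑ i ∈ range r, w (σ^[i] u) ≤ M := by
    intro r hr
    calc ∑ i ∈ range r, w (σ^[i] u) ≤ ∑ i ∈ range r, |w (σ^[i] u)| :=
          Finset.sum_le_sum fun i _ => le_abs_self _
      _ ≤ M := Finset.sum_le_sum_of_subset_of_nonneg
          (Finset.range_subset_range.2 hr) (fun i _ _ => abs_nonneg _)
  rw [Filter.tendsto_atTop_atBot]
  intro B
  set S0 := ∑ i ∈ range a, w (σ^[i] v) with hS0
  set K := (S0 + M - B).toNat with hK
  refine ⟨a + K * p, fun n hn => ?_⟩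
  set m := n - a with hm
  have hmn : n = a + m := by omega
  have hmK : K * p ≤ m := by omega
  set q := m / p with hq
  set r := m % p with hr
  have hqr : m = q * p + r := by
    rw [hq, hr, Nat.mul_comm]
    exact (Nat.div_add_mod m p).symm
  have hKq : K ≤ q := (Nat.le_div_iff_mul_le (by omega)).2 hmK
  have hrp : r ≤ p := le_of_lt (Nat.mod_lt _ (by omega))
  have hcalc : ∑ i ∈ range n, w (σ^[i] v) = S0 + q * c + ∑ i ∈ range r, w (σ^[i] u) := by
    rw [hmn, hsplit v a m, ← hu, hqr, hsplit u (q * p) r, hperq q, hmul q, ← hS0]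
    ring
  have h1 : ∑ i ∈ range r, w (σ^[i] u) ≤ M := hMle r hrp
  have h2 : (q : ℤ) * c ≤ -(q : ℤ) := by nlinarith [Int.ofNat_nonneg q]
  have h3 : (K : ℤ) ≤ (q : ℤ) := by exact_mod_cast hKq
  have h4 : S0 + M - B ≤ (K : ℤ) := Int.self_le_toNat _
  rw [hcalc]; linarith
end

section
/- Let V be a nonempty finite type with cardinality K, σ : V → V a successor function, and w : V → ℤ a weight function. Suppose every cycle of σ has strictly negative weight, i.e., for all v ∈ V and all k ≥ 1 with σ^[k] v = v one has ∑_{i<k} w (σ^[i] v) < 0. Then for every v ∈ V, the limit superior as n → ∞ of the running averages (Sₙ(v) : ℝ)/n is at most −1/K, where Sₙ(v) = ∑_{i<n} w (σ^[i] v). -/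
/-!
The partial sum `Sₙ(v)` is `birkhoffSum σ w n v`. By pigeonhole, the orbit of `v` enters a cycle
of some length `ℓ ≤ K` after `m` steps. From then on every lap of `ℓ` steps adds the weight of a
cycle, an integer `< 0` and hence `≤ -1`, so `Sₙ + n / ℓ` stays bounded above and the averages
have limsup at most `-1 / ℓ ≤ -1 / K`. The averages are also bounded below by `min w`; without
this the real `limsup` would be a junk value.
-/

open Filter Function

theorem Function.exists_iterate_mem_periodicPts {α : Type*} [Finite α] (f : α → α) (x : α) :
    ∃ m, f^[m] x ∈ periodicPts f := by
  obtain ⟨a, b, heq, hne⟩ : ∃ a b, f^[a] x = f^[b] x ∧ a ≠ b := by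
    simpa [Injective] using not_injective_infinite_finite (f^[·] x)
  wlog hlt : a < b generalizing a b
  · exact this b a heq.symm hne.symm (by lia)
  refine ⟨a, mk_mem_periodicPts (n := b - a) (by lia) ?_⟩
  rw [IsPeriodicPt, IsFixedPt, ← iterate_add_apply, Nat.sub_add_cancel hlt.le, heq]

theorem exists_forall_ge_le_of_map_add_le {α : Type*} [Preorder α] [IsDirectedOrder α]
    {b : ℕ → α} {m ℓ : ℕ} (hℓ : 0 < ℓ) (hb : ∀ n ≥ m, b (n + ℓ) ≤ b n) :
    ∃ B, ∀ n ≥ m, b n ≤ B := by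
  have : Nonempty α := ⟨b 0⟩
  obtain ⟨B, hB⟩ := Finite.exists_le fun r : Fin ℓ => b (m + r)
  refine ⟨B, fun n => Nat.strong_induction_on n fun n ih hmn => ?_⟩
  by_cases hn : n < m + ℓ
  · simpa [Nat.add_sub_cancel' hmn] using hB ⟨n - m, by lia⟩
  · obtain ⟨k, rfl⟩ : ∃ k, n = k + ℓ := ⟨n - ℓ, by lia⟩
    exact (hb k (by lia)).trans (ih k (by lia) (by lia))

theorem limsup_div_le_of_map_add_le {a : ℕ → ℝ} {m ℓ : ℕ} {c : ℝ} (hℓ : 0 < ℓ)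
    (ha : ∀ n ≥ m, a (n + ℓ) ≤ a n + c)
    (hbdd : IsBoundedUnder (· ≥ ·) atTop fun n => a n / n) :
    limsup (fun n => a n / n) atTop ≤ c / ℓ := by
  have hℓ' : (0 : ℝ) < ℓ := by exact_mod_cast hℓ
  obtain ⟨B, hB⟩ := exists_forall_ge_le_of_map_add_le (b := fun n => a n - c * n / ℓ) hℓ
    fun n hn => by
      have := ha n hn
      push_cast
      rw [mul_add, add_div, mul_div_cancel_right₀ _ hℓ'.ne']
      linarith
  have hlim : Tendsto (fun n : ℕ => B / n + c / ℓ) atTop (nhds (c / ℓ)) := by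
    simpa using (tendsto_const_div_atTop_nhds_zero_nat B).add_const (c / ℓ)
  refine (limsup_le_limsup ?_ hbdd.isCoboundedUnder_le hlim.isBoundedUnder_le).trans
    hlim.limsup_eq.le
  filter_upwards [eventually_ge_atTop (max m 1)] with n hn
  have hn' : (0 : ℝ) < n := by exact_mod_cast (le_of_max_le_right hn)
  calc a n / n ≤ (B + c * n / ℓ) / n := by
        gcongr
        linarith [hB n (le_of_max_le_left hn)]
    _ = B / n + c / ℓ := by field_simp

theorem isBoundedUnder_ge_birkhoffSum_div {α : Type*} [Finite α]
    (f : α → α) (g : α → ℤ) (x : α) :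
    IsBoundedUnder (· ≥ ·) atTop fun n => ((birkhoffSum f g n x : ℤ) : ℝ) / n := by
  obtain ⟨M, hM⟩ := Finite.exists_ge g
  refine isBoundedUnder_of_eventually_ge (a := (M : ℝ)) ?_
  filter_upwards [eventually_gt_atTop 0] with n hn
  have hsum : n • M ≤ birkhoffSum f g n x := by
    simpa [birkhoffSum] using Finset.card_nsmul_le_sum (Finset.range n) _ M fun k _ => hM (f^[k] x)
  rw [le_div_iff₀ (by exact_mod_cast hn)]
  simpa [mul_comm] using (Int.cast_le (R := ℝ)).2 hsum

theorem limsup_avg_le_of_neg_cycles_general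
    {V : Type*} [Fintype V] (σ : V → V) (w : V → ℤ)
    (K : ℕ) (hK : K = Fintype.card V)
    (hcyc : ∀ v : V, ∀ k : ℕ, 1 ≤ k → σ^[k] v = v →
      (∑ i ∈ Finset.range k, w (σ^[i] v)) < 0)
    (v : V) :
    Filter.limsup
      (fun n : ℕ => ((∑ i ∈ Finset.range n, w (σ^[i] v) : ℤ) : ℝ) / n)
      Filter.atTop ≤ -1 / K := by
  obtain ⟨m, hm⟩ := exists_iterate_mem_periodicPts σ v
  set ℓ := minimalPeriod σ (σ^[m] v)
  have hℓ : 0 < ℓ := minimalPeriod_pos_of_mem_periodicPts hm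
  have hℓK : (ℓ : ℝ) ≤ K := by exact_mod_cast hK ▸ minimalPeriod_le_card
  have hstep : ∀ n ≥ m,
      ((birkhoffSum σ w (n + ℓ) v : ℤ) : ℝ) ≤ (birkhoffSum σ w n v : ℤ) + -1 := by
    intro n hn
    have hper : IsPeriodicPt σ ℓ (σ^[n] v) := by
      simpa [← iterate_add_apply, Nat.sub_add_cancel hn] using
        (isPeriodicPt_minimalPeriod σ (σ^[m] v)).apply_iterate (n - m)
    have hneg : birkhoffSum σ w ℓ (σ^[n] v) < 0 := hcyc _ ℓ hℓ hper
    rw [birkhoffSum_add]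
    exact_mod_cast (by lia : birkhoffSum σ w n v + birkhoffSum σ w ℓ (σ^[n] v) ≤ _ + -1)
  calc _ ≤ -1 / (ℓ : ℝ) :=
        limsup_div_le_of_map_add_le hℓ hstep (isBoundedUnder_ge_birkhoffSum_div σ w v)
    _ ≤ -1 / K := by
      rw [neg_div, neg_div, neg_le_neg_iff]
      exact one_div_le_one_div_of_le (by positivity) hℓK

/-- If every cycle of a successor function on a nonempty finite weighted
arena with `K` vertices has strictly negative weight, then the limit
superior of the running averages along any orbit is at most `-1/K`. -/
theorem limsup_avg_le_of_neg_cycles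
    {V : Type*} [Fintype V] [Nonempty V] (σ : V → V) (w : V → ℤ)
    (K : ℕ) (hK : K = Fintype.card V)
    (hcyc : ∀ v : V, ∀ k : ℕ, 1 ≤ k → σ^[k] v = v →
      (∑ i ∈ Finset.range k, w (σ^[i] v)) < 0)
    (v : V) :
    Filter.limsup
      (fun n : ℕ => ((∑ i ∈ Finset.range n, w (σ^[i] v) : ℤ) : ℝ) / n)
      Filter.atTop ≤ -1 / K :=
  limsup_avg_le_of_neg_cycles_general σ w K hK hcyc v
end

section
/- Let V be a nonempty finite type with cardinality K, σ : V → V a successor function, and w : V → ℤ a weight function with N = ∑_{u∈V} |w u|. Suppose every cycle of σ has strictly negative weight, i.e., for all v ∈ V and all k ≥ 1 with σ^[k] v = v one has ∑_{i<k} w (σ^[i] v) < 0. Then for every v ∈ V and every B ∈ ℕ there exists n ≤ K + K·(N + B + 1) such that Sₙ(v) < −B, where Sₙ(v) = ∑_{i<n} w (σ^[i] v). -/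
/-- Quantitative length bound: if all cycles of `σ` are strictly negative
then from any vertex, within `K + K·(N + B + 1)` steps the partial sum
drops below `-B`, where `K = |V|` and `N` is the sum of the absolute
values of all weights. -/
theorem exists_short_prefix_below_of_neg_cycles
    {V : Type*} [Fintype V] [Nonempty V] (σ : V → V) (w : V → ℤ)
    (K : ℕ) (hK : K = Fintype.card V)
    (N : ℤ) (hN : N = ∑ u : V, |w u|)
    (hcyc : ∀ v : V, ∀ k : ℕ, 1 ≤ k → σ^[k] v = v →
      (∑ i ∈ Finset.range k, w (σ^[i] v)) < 0)
    (v : V) (B : ℕ) :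
    ∃ n : ℕ, (n : ℤ) ≤ (K : ℤ) + (K : ℤ) * (N + (B : ℤ) + 1) ∧
      (∑ i ∈ Finset.range n, w (σ^[i] v)) < -(B : ℤ) := by
  classical
  have hN0 : 0 ≤ N := by
    rw [hN]; positivity
  set f : ℕ → V := fun i => σ^[i] v with hf
  -- there is a collision within the first K+1 iterates
  have hcoll : ∃ n, n ≤ K ∧ ∃ i, i < n ∧ f i = f n := by
    have hninj : ¬ Function.Injective (fun i : Fin (K + 1) => f i) := by
      intro hinj
      have := Fintype.card_le_of_injective _ hinj
      simp [hK] at this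
    rw [Function.not_injective_iff] at hninj
    obtain ⟨i, j, hfij, hne⟩ := hninj
    rcases lt_or_gt_of_ne hne with h | h
    · exact ⟨j, Nat.lt_succ_iff.mp j.isLt, i, h, hfij⟩
    · exact ⟨i, Nat.lt_succ_iff.mp i.isLt, j, h, hfij.symm⟩
  -- minimal collision point b
  let P : ℕ → Prop := fun n => ∃ i, i < n ∧ f i = f n
  have hP : ∃ n, P n := ⟨hcoll.choose, hcoll.choose_spec.2⟩
  let b := Nat.find hP
  have hbK : b ≤ K := Nat.find_min' hP hcoll.choose_spec.2 |>.trans hcoll.choose_spec.1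
  obtain ⟨a, hab, hfab⟩ : P b := Nat.find_spec hP
  have hinj : ∀ i j, i < b → j < b → f i = f j → i = j := by
    intro i j hi hj hij
    by_contra hne
    rcases lt_or_gt_of_ne hne with h | h
    · exact absurd ⟨i, h, hij⟩ (Nat.find_min hP hj)
    · exact absurd ⟨j, h, hij.symm⟩ (Nat.find_min hP hi)
  set u : V := f a with hu
  set k : ℕ := b - a with hkdef
  have hk1 : 1 ≤ k := by omega
  have hcycle : σ^[k] u = u := by
    have : σ^[k] (σ^[a] v) = σ^[k + a] v := (Function.iterate_add_apply σ k a v).symm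
    have hkb : k + a = b := by omega
    simp only [hu, hf, this, hkb]
    exact hfab.symm
  -- cycle weight
  set W : ℤ := ∑ i ∈ Finset.range k, w (σ^[i] u) with hW
  have hWneg : W ≤ -1 := by
    have := hcyc u k hk1 hcycle
    omega
  -- iterated cycle
  have hmult : ∀ m : ℕ, σ^[m * k] u = u := by
    intro m
    induction m with
    | zero => simp
    | succ m ih =>
      have : (m + 1) * k = k + m * k := by ring
      rw [this, Function.iterate_add_apply, ih, hcycle]
  -- sum decomposition
  set Sa : ℤ := ∑ i ∈ Finset.range a, w (f i) with hSa
  have hsum : ∀ m : ℕ, (∑ i ∈ Finset.range (a + m * k), w (f i)) = Sa + m * W := by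
    intro m
    induction m with
    | zero => simp [hSa]
    | succ m ih =>
      have h1 : a + (m + 1) * k = (a + m * k) + k := by ring
      rw [h1, Finset.sum_range_add, ih]
      have h2 : ∀ i ∈ Finset.range k, w (f (a + m * k + i)) = w (σ^[i] u) := by
        intro i _
        congr 1
        have : f (a + m * k + i) = σ^[i] (σ^[m * k] (σ^[a] v)) := by
          simp only [hf]
          rw [← Function.iterate_add_apply, ← Function.iterate_add_apply]
          congr 1
          omega
        rw [this, hmult m]
      rw [Finset.sum_congr rfl h2, ← hW]
      push_cast
      ring
  -- bound on Sa via injectivity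
  have hSaN : Sa ≤ N := by
    have h1 : Sa ≤ ∑ i ∈ Finset.range a, |w (f i)| :=
      Finset.sum_le_sum fun i _ => le_abs_self _
    have h2 : ∑ i ∈ Finset.range a, |w (f i)| = ∑ x ∈ (Finset.range a).image f, |w x| := by
      rw [Finset.sum_image]
      intro i hi j hj hij
      exact hinj i j (by simp at hi; omega) (by simp at hj; omega) hij
    have h3 : ∑ x ∈ (Finset.range a).image f, |w x| ≤ ∑ x : V, |w x| := by
      apply Finset.sum_le_sum_of_subset_of_nonneg (Finset.subset_univ _)
      intro x _ _; positivity
    calc Sa ≤ _ := h1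
      _ = _ := h2
      _ ≤ _ := h3
      _ = N := hN.symm
  -- choose number of cycle repetitions
  set m : ℕ := (N + B + 1).toNat with hm
  have hmcast : (m : ℤ) = N + B + 1 := Int.toNat_of_nonneg (by omega)
  refine ⟨a + m * k, ?_, ?_⟩
  · push_cast
    have hak : a < b := hab
    have hkK : (k : ℤ) ≤ K := by exact_mod_cast Nat.le_trans (by omega) hbK
    have : (m : ℤ) * k ≤ (N + B + 1) * K := by
      rw [hmcast]
      exact mul_le_mul_of_nonneg_left hkK (by omega)
    have haK : (a : ℤ) ≤ K := by exact_mod_cast Nat.le_trans (by omega) hbK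
    nlinarith
  · rw [hsum m]
    have : (m : ℤ) * W ≤ -(m : ℤ) := by nlinarith [hmcast, hN0]
    omega
end
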